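/- arXiv:0808.2686 — 6 statements merged into one kernel-verified Lean document; each statement's English description precedes it below -/
import Mathlib

section
/- If < is a discrete right-order on a group G with least positive element a, then the cyclic subgroup ⟨a⟩ is convex with respect to <. -/
/-! Right multiplication by `a ^ (-k)` shows that nothing lies strictly between `a ^ k` and
`a ^ (k + 1)`, since `a` is the least positive element. Hence, if `a ^ m < y` and `y` is not a
power of `a`, induction gives `a ^ j < y` for every `j ≥ m`, which fails at `j = n` when
`y < a ^ n`. -/

variable {G : Type*} [Group G]

/-- A right order on a group: a strict total order invariant under right multiplication. -/
def IsRightOrder (r : G → G → Prop) : Prop :=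
  IsStrictTotalOrder G r ∧ ∀ f g h : G, r f g → r (f * h) (g * h)

/-- `a` is the least element greater than the identity for the order `r`. -/
def LeastPos (r : G → G → Prop) (a : G) : Prop :=
  r 1 a ∧ ∀ g : G, r 1 g → g = a ∨ r a g

namespace IsRightOrder

variable {r : G → G → Prop}

theorem trans (hr : IsRightOrder r) {f g h : G} (hfg : r f g) (hgh : r g h) : r f h :=
  haveI := hr.1
  _root_.trans_of r hfg hgh

theorem irrefl (hr : IsRightOrder r) (g : G) : ¬ r g g :=
  haveI := hr.1
  irrefl_of r g

theorem trichotomous (hr : IsRightOrder r) (f g : G) : r f g ∨ f = g ∨ r g f :=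
  haveI := hr.1
  trichotomous_of r f g

theorem mul_right (hr : IsRightOrder r) {f g : G} (h : r f g) (c : G) : r (f * c) (g * c) :=
  hr.2 f g c h

theorem zpow_lt_zpow_add_one (hr : IsRightOrder r) {a : G} (ha : r 1 a) (k : ℤ) :
    r (a ^ k) (a ^ (k + 1)) := by
  simpa [zpow_one_add, add_comm k 1] using hr.mul_right ha (a ^ k)

theorem zpow_lt_zpow (hr : IsRightOrder r) {a : G} (ha : r 1 a) {i j : ℤ} (hij : i < j) :
    r (a ^ i) (a ^ j) := by
  induction j, hij using Int.leInduction with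
  | base => exact hr.zpow_lt_zpow_add_one ha i
  | succ j _ ih => exact hr.trans ih (hr.zpow_lt_zpow_add_one ha j)

theorem lt_of_zpow_lt_zpow (hr : IsRightOrder r) {a : G} (ha : r 1 a) {i j : ℤ}
    (h : r (a ^ i) (a ^ j)) : i < j := by
  by_contra! hji
  rcases hji.lt_or_eq with hlt | rfl
  · exact hr.irrefl _ (hr.trans h (hr.zpow_lt_zpow ha hlt))
  · exact hr.irrefl _ h

end IsRightOrder

namespace LeastPos

variable {r : G → G → Prop} {a : G}

theorem not_between_mul (hr : IsRightOrder r) (ha : LeastPos r a) {b y : G} (hby : r b y) :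
    ¬ r y (a * b) := by
  intro hya
  have hpos : r 1 (y * b⁻¹) := by simpa using hr.mul_right hby b⁻¹
  have hlt : r (y * b⁻¹) a := by simpa using hr.mul_right hya b⁻¹
  rcases ha.2 _ hpos with heq | hgt
  · exact hr.irrefl a (heq ▸ hlt)
  · exact hr.irrefl a (hr.trans hgt hlt)

theorem zpow_add_one_lt (hr : IsRightOrder r) (ha : LeastPos r a) {k : ℤ} {y : G}
    (hky : r (a ^ k) y) (hy : y ∉ Subgroup.zpowers a) : r (a ^ (k + 1)) y := by
  rcases hr.trichotomous (a ^ (k + 1)) y with hlt | heq | hgt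
  · exact hlt
  · exact absurd ⟨k + 1, heq⟩ hy
  · rw [add_comm, zpow_one_add] at hgt
    exact absurd hgt (ha.not_between_mul hr hky)

end LeastPos

theorem stmt0 (r : G → G → Prop) (hr : IsRightOrder r) (a : G) (ha : LeastPos r a) :
    ∀ x y z : G, x ∈ Subgroup.zpowers a → z ∈ Subgroup.zpowers a →
      r x y → r y z → y ∈ Subgroup.zpowers a := by
  rintro x y z ⟨m, rfl⟩ ⟨n, rfl⟩ hxy hyz
  by_contra hy
  have hmn : m < n := hr.lt_of_zpow_lt_zpow ha.1 (hr.trans hxy hyz)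
  have below : ∀ j, m ≤ j → r (a ^ j) y := fun j hj => by
    induction j, hj using Int.leInduction with
    | base => exact hxy
    | succ j _ ih => exact ha.zpow_add_one_lt hr ih hy
  exact hr.irrefl _ (hr.trans (below n hmn.le) hyz)
end

section
/- If < is a discrete (two-sided) order on a group G with least positive element z, then z lies in the center of G. -/
variable {G : Type*} [Group G]

/-
A two-sided order is invariant under conjugation, so every conjugate of the least positive
element `z` is again a least positive element; by uniqueness of least positive elements,
every conjugate of `z` equals `z`.
-/

theorem rel_conj {r : G → G → Prop}
    (hright : ∀ f g h : G, r f g → r (f * h) (g * h))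
    (hleft : ∀ f g h : G, r f g → r (h * f) (h * g))
    {a b : G} (hab : r a b) (g : G) : r (g * a * g⁻¹) (g * b * g⁻¹) :=
  hright _ _ _ (hleft _ _ _ hab)

theorem LeastPos.unique {r : G → G → Prop} [Std.Asymm r] {a b : G}
    (ha : LeastPos r a) (hb : LeastPos r b) : a = b := by
  rcases ha.2 b hb.1 with hba | hab
  · exact hba.symm
  · rcases hb.2 a ha.1 with hab' | hba
    · exact hab'
    · exact absurd hba (asymm hab)

theorem LeastPos.conj {r : G → G → Prop}
    (hright : ∀ f g h : G, r f g → r (f * h) (g * h))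
    (hleft : ∀ f g h : G, r f g → r (h * f) (h * g))
    {z : G} (hz : LeastPos r z) (g : G) : LeastPos r (g * z * g⁻¹) := by
  have hpos : r 1 (g * z * g⁻¹) := by
    simpa using rel_conj hright hleft hz.1 g
  refine ⟨hpos, fun h hh => ?_⟩
  have hconj_pos : r 1 (g⁻¹ * h * g) := by
    simpa using rel_conj hright hleft hh g⁻¹
  have hback : g * (g⁻¹ * h * g) * g⁻¹ = h := by group
  rcases hz.2 _ hconj_pos with heq | hlt
  · left
    rw [← hback, heq]
  · right
    simpa only [hback] using rel_conj hright hleft hlt g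

theorem stmt4 (r : G → G → Prop) (hr : IsRightOrder r)
    (hleft : ∀ f g h : G, r f g → r (h * f) (h * g))
    (z : G) (hz : LeastPos r z) :
    ∀ g : G, z * g = g * z := by
  intro g
  have := hr.1
  have hconj : g * z * g⁻¹ = z := (hz.conj hr.2 hleft g).unique hz
  exact (mul_inv_eq_iff_eq_mul.mp hconj).symm
end

section
/- If (G, <) is a nontrivial right-ordered group such that < restricted to the set of positive elements of G is a well-order, then G is infinite cyclic. -/
/-!
If `a` is the least positive element, right invariance makes `a * g` the immediate successor of
every `g`. A least positive element `m` outside `⟨a⟩` would then have immediate predecessor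
`a⁻¹ * m`, which can be neither negative, nor `1`, nor a positive element of `⟨a⟩`.
Finally `a` has infinite order because all its positive powers are positive.
-/

variable {G : Type*} [Group G]

namespace IsRightOrder

variable {r : G → G → Prop}

theorem asymm (hr : IsRightOrder r) {f g : G} (hfg : r f g) : ¬ r g f :=
  fun hgf => hr.irrefl f (hr.trans hfg hgf)

theorem one_lt_inv (hr : IsRightOrder r) {g : G} (hg : r g 1) : r 1 g⁻¹ := by
  simpa using hr.2 g 1 g⁻¹ hg

theorem exists_one_lt [Nontrivial G] (hr : IsRightOrder r) : ∃ g : G, r 1 g := by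
  obtain ⟨g, hg⟩ := exists_ne (1 : G)
  rcases hr.trichotomous 1 g with h | rfl | h
  · exact ⟨g, h⟩
  · exact absurd rfl hg
  · exact ⟨g⁻¹, hr.one_lt_inv h⟩

theorem one_lt_mul (hr : IsRightOrder r) {a b : G} (ha : r 1 a) (hb : r 1 b) : r 1 (a * b) :=
  hr.trans hb (by simpa using hr.2 1 a b ha)

theorem one_lt_pow_succ (hr : IsRightOrder r) {a : G} (ha : r 1 a) (n : ℕ) :
    r 1 (a ^ (n + 1)) := by
  induction n with
  | zero => simpa using ha
  | succ n ih => simpa only [pow_succ] using hr.one_lt_mul ih ha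

theorem not_isOfFinOrder_of_one_lt (hr : IsRightOrder r) {a : G} (ha : r 1 a) :
    ¬ IsOfFinOrder a := by
  rw [isOfFinOrder_iff_pow_eq_one]
  rintro ⟨n, hn, hpow⟩
  obtain ⟨k, rfl⟩ := Nat.exists_eq_add_one_of_ne_zero hn.ne'
  exact hr.irrefl 1 (hpow ▸ hr.one_lt_pow_succ ha k)

theorem exists_leastPos [Nontrivial G] (hr : IsRightOrder r)
    (hwo : ∀ S : Set G, S ⊆ {g : G | r 1 g} → S.Nonempty → ∃ m ∈ S, ∀ x ∈ S, m = x ∨ r m x) :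
    ∃ a : G, LeastPos r a := by
  obtain ⟨a, ha, hleast⟩ := hwo {g | r 1 g} subset_rfl hr.exists_one_lt
  exact ⟨a, ha, fun g hg => (hleast g hg).imp Eq.symm id⟩

theorem lt_mul_left_of_leastPos (hr : IsRightOrder r) {a : G} (ha : LeastPos r a) (g : G) :
    r g (a * g) := by
  simpa using hr.2 1 a g ha.1

theorem mul_left_le_of_leastPos (hr : IsRightOrder r) {a g h : G} (ha : LeastPos r a)
    (hgh : r g h) : h = a * g ∨ r (a * g) h := by
  have hpos : r 1 (h * g⁻¹) := by simpa using hr.2 g h g⁻¹ hgh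
  rcases ha.2 _ hpos with heq | hlt
  · exact Or.inl (by simp [← heq])
  · exact Or.inr (by simpa using hr.2 a (h * g⁻¹) g hlt)

theorem mem_zpowers_of_one_lt (hr : IsRightOrder r)
    (hwo : ∀ S : Set G, S ⊆ {g : G | r 1 g} → S.Nonempty → ∃ m ∈ S, ∀ x ∈ S, m = x ∨ r m x)
    {a g : G} (ha : LeastPos r a) (hg : r 1 g) : g ∈ Subgroup.zpowers a := by
  by_contra hg'
  obtain ⟨m, ⟨hm, hm'⟩, hmin⟩ :=
    hwo {g | r 1 g ∧ g ∉ Subgroup.zpowers a} (fun _ h => h.1) ⟨g, hg, hg'⟩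
  have hpm : r (a⁻¹ * m) m := by simpa using hr.lt_mul_left_of_leastPos ha (a⁻¹ * m)
  have hp : a⁻¹ * m ∈ Subgroup.zpowers a := by
    rcases hr.trichotomous 1 (a⁻¹ * m) with hpos | hone | hneg
    · by_contra hp
      rcases hmin _ ⟨hpos, hp⟩ with heq | hlt
      · exact hr.irrefl m (by rwa [← heq] at hpm)
      · exact hr.asymm hlt hpm
    · exact hone ▸ one_mem _
    · rcases hr.mul_left_le_of_leastPos ha hneg with heq | hlt
      · rw [mul_inv_cancel_left] at heq
        subst heq
        exact (hr.irrefl 1 hm).elim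
      · exact (hr.asymm hm (by simpa using hlt)).elim
  exact hm' (by simpa using mul_mem (Subgroup.mem_zpowers a) hp)

end IsRightOrder

theorem stmt8 (r : G → G → Prop) (hr : IsRightOrder r) [Nontrivial G]
    (hwo : ∀ S : Set G, S ⊆ {g : G | r 1 g} → S.Nonempty →
      ∃ m ∈ S, ∀ x ∈ S, m = x ∨ r m x) :
    ∃ g : G, ¬ IsOfFinOrder g ∧ ∀ x : G, x ∈ Subgroup.zpowers g := by
  obtain ⟨a, ha⟩ := hr.exists_leastPos hwo
  refine ⟨a, hr.not_isOfFinOrder_of_one_lt ha.1, fun x => ?_⟩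
  rcases hr.trichotomous 1 x with hpos | rfl | hneg
  · exact hr.mem_zpowers_of_one_lt hwo ha hpos
  · exact one_mem _
  · exact (Subgroup.inv_mem_iff _).mp (hr.mem_zpowers_of_one_lt hwo ha (hr.one_lt_inv hneg))
end

section
/- If < is a discrete right-order on a group G with least positive element a, then for every g ∈ G with 1 < g, both a·g·a⁻¹ and a⁻¹·g·a are positive (greater than 1). -/
/-!
Positive elements of a right order are closed under multiplication, since `1 < g` gives
`h < g * h`. If `1 < g`, minimality of `a` gives `g = a` or `a < g`; in the latter case
`1 < g * a⁻¹`, so `a * g * a⁻¹ = a * (g * a⁻¹)` is positive. For `a⁻¹ * g * a`, were it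
negative, its inverse would be positive, and conjugating that by `a` would make `g⁻¹` positive.
-/

variable {G : Type*} [Group G]

namespace IsRightOrder

variable {r : G → G → Prop} {g h : G}

theorem one_lt_inv_iff (hr : IsRightOrder r) : r 1 g⁻¹ ↔ r g 1 :=
  ⟨fun h => by simpa using hr.2 1 g⁻¹ g h, fun h => by simpa using hr.2 g 1 g⁻¹ h⟩

theorem one_lt_mul_s9 (hr : IsRightOrder r) (hg : r 1 g) (hh : r 1 h) : r 1 (g * h) := by
  have := hr.1
  exact trans_of r hh (by simpa using hr.2 1 g h hg)

end IsRightOrder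

namespace LeastPos

variable {r : G → G → Prop} {a g : G}

theorem one_lt_conj (hr : IsRightOrder r) (ha : LeastPos r a) (hg : r 1 g) :
    r 1 (a * g * a⁻¹) := by
  rcases ha.2 g hg with rfl | hag
  · simpa using ha.1
  · have hga : r 1 (g * a⁻¹) := by simpa using hr.2 a g a⁻¹ hag
    simpa [mul_assoc] using hr.one_lt_mul_s9 ha.1 hga

theorem one_lt_conj_inv (hr : IsRightOrder r) (ha : LeastPos r a) (hg : r 1 g) :
    r 1 (a⁻¹ * g * a) := by
  have := hr.1
  rcases trichotomous_of r 1 (a⁻¹ * g * a) with hpos | hone | hneg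
  · exact hpos
  · obtain rfl : g = 1 := by rw [← conj_eq_one_iff (a := a⁻¹), inv_inv]; exact hone.symm
    exact absurd hg (irrefl_of r 1)
  · have hg_inv : r 1 g⁻¹ := by
      simpa [mul_assoc] using one_lt_conj hr ha (hr.one_lt_inv_iff.2 hneg)
    exact (asymm_of r hg (hr.one_lt_inv_iff.1 hg_inv)).elim

end LeastPos

theorem stmt9 (r : G → G → Prop) (hr : IsRightOrder r) (a : G) (ha : LeastPos r a)
    (g : G) (hg : r 1 g) :
    r 1 (a * g * a⁻¹) ∧ r 1 (a⁻¹ * g * a) :=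
  ⟨ha.one_lt_conj hr hg, ha.one_lt_conj_inv hr hg⟩
end

section
/- Every nonabelian free group of finite rank admits a discrete right-order (e.g., with any primitive element modulo the commutator subgroup as the least positive element). -/
/-!
Right orders correspond to positive cones `P` via `f < g ↔ g f⁻¹ ∈ P`.

The Magnus map `x_i ↦ 1 + X_i` embeds the free group in the units of noncommutative power
series over `ℤ`; calling `g` positive when the coefficient of `μ(g) - 1` at the least word of
its support (words ordered by length first) is positive gives a conjugation-invariant cone.

Let `φ` be the exponent sum of a basis letter `a`, so `g ↦ g a^{-φ(g)}` projects
`F = ker φ ⋊ ⟨a⟩` onto `ker φ`. Comparing this projection in the Magnus cone first and `φ` second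
gives a cone whose least element is `a`: anything positive other than `a` either has positive
projection, which right multiplication by `a⁻¹` does not change, or is `a^k` with `k ≥ 2`.
-/

variable {G : Type*} [Group G]

structure IsPositiveCone (P : Set G) : Prop where
  one_notMem : (1 : G) ∉ P
  mul_mem {g h : G} : g ∈ P → h ∈ P → g * h ∈ P
  mem_or_inv_mem {g : G} : g ≠ 1 → g ∈ P ∨ g⁻¹ ∈ P

namespace IsPositiveCone

variable {P : Set G}

theorem isRightOrder (hP : IsPositiveCone P) : IsRightOrder fun f g : G => g * f⁻¹ ∈ P := by
  refine ⟨{ trichotomous := ?_, irrefl := ?_, trans := ?_ }, ?_⟩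
  · intro f g hfg hgf
    by_contra hne
    have : g * f⁻¹ ≠ 1 := fun h => hne (mul_inv_eq_one.1 h).symm
    rcases hP.mem_or_inv_mem this with h | h
    · exact hfg h
    · exact hgf (by simpa using h)
  · intro f h
    exact hP.one_notMem (by simpa using h)
  · intro f g h hfg hgh
    simpa [mul_assoc] using hP.mul_mem hgh hfg
  · intro f g h hfg
    simpa [mul_assoc] using hfg

end IsPositiveCone

theorem leastPos_of_eq_or_mul_inv_mem {P : Set G} {a : G} (ha : a ∈ P)
    (hmin : ∀ g ∈ P, g = a ∨ g * a⁻¹ ∈ P) : LeastPos (fun f g : G => g * f⁻¹ ∈ P) a :=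
  ⟨by simpa using ha, fun g hg => hmin g (by simpa using hg)⟩

section DiscreteCone

variable (φ : G →* Multiplicative ℤ) (a : G)

def kerPart (g : G) : G := g * a ^ (-(φ g).toAdd)

def discreteCone (P : Set G) : Set G :=
  {g | kerPart φ a g ∈ P ∨ (kerPart φ a g = 1 ∧ 0 < (φ g).toAdd)}

variable {φ a}

theorem mem_discreteCone {P : Set G} {g : G} :
    g ∈ discreteCone φ a P ↔ kerPart φ a g ∈ P ∨ (kerPart φ a g = 1 ∧ 0 < (φ g).toAdd) :=
  Iff.rfl

theorem kerPart_mul (g h : G) :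
    kerPart φ a (g * h) =
      kerPart φ a g * (a ^ (φ g).toAdd * kerPart φ a h * a ^ (-(φ g).toAdd)) := by
  simp only [kerPart, map_mul, toAdd_mul, neg_add, zpow_add]
  group

theorem kerPart_inv (g : G) :
    kerPart φ a g⁻¹ = a ^ (-(φ g).toAdd) * (kerPart φ a g)⁻¹ * a ^ (φ g).toAdd := by
  simp only [kerPart, map_inv, toAdd_inv, neg_neg]
  group

theorem eq_zpow_of_kerPart_eq_one {g : G} (h : kerPart φ a g = 1) : g = a ^ (φ g).toAdd := by
  rw [kerPart, mul_eq_one_iff_eq_inv, ← zpow_neg, neg_neg] at h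
  exact h

theorem isPositiveCone_discreteCone {P : Set G} (hP : IsPositiveCone P)
    (hconj : ∀ g, ∀ h ∈ P, g * h * g⁻¹ ∈ P) : IsPositiveCone (discreteCone φ a P) where
  one_notMem := by
    simpa [discreteCone, kerPart] using hP.one_notMem
  mul_mem := by
    intro g h hg hh
    have hconj' : ∀ k : ℤ, ∀ x ∈ P, a ^ k * x * a ^ (-k) ∈ P := fun k x hx => by
      simpa [zpow_neg] using hconj (a ^ k) x hx
    simp only [mem_discreteCone, kerPart_mul, map_mul, toAdd_mul] at hg hh ⊢
    rcases hg with hg | ⟨hg1, hg2⟩ <;> rcases hh with hh | ⟨hh1, hh2⟩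
    · exact Or.inl (hP.mul_mem hg (hconj' _ _ hh))
    · left; simpa [hh1] using hg
    · left; simpa [hg1] using hconj' _ _ hh
    · right; simp only [hg1, hh1]; constructor <;> [group; omega]
  mem_or_inv_mem := by
    intro g hg
    simp only [mem_discreteCone, kerPart_inv, map_inv, toAdd_inv]
    by_cases hk : kerPart φ a g = 1
    · have hne : (φ g).toAdd ≠ 0 := fun h0 => hg (by simpa [h0] using eq_zpow_of_kerPart_eq_one hk)
      simp only [hk, inv_one, mul_one, zpow_neg, inv_mul_cancel, true_and]
      omega
    · rcases hP.mem_or_inv_mem hk with h | h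
      · exact Or.inl (Or.inl h)
      · exact Or.inr (Or.inl (by simpa using hconj (a ^ (φ g).toAdd)⁻¹ _ h))

variable (ha : φ a = Multiplicative.ofAdd 1)
include ha

theorem kerPart_mul_inv (g : G) : kerPart φ a (g * a⁻¹) = kerPart φ a g := by
  simp only [kerPart, map_mul, map_inv, ha, toAdd_mul, toAdd_inv, toAdd_ofAdd]
  group

theorem mem_discreteCone_self (P : Set G) : a ∈ discreteCone φ a P := by
  refine Or.inr ⟨?_, by simp [ha]⟩
  simp [kerPart, ha]

theorem eq_or_mul_inv_mem_discreteCone {P : Set G} {g : G} (hg : g ∈ discreteCone φ a P) :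
    g = a ∨ g * a⁻¹ ∈ discreteCone φ a P := by
  simp only [mem_discreteCone, kerPart_mul_inv ha, map_mul, map_inv, ha,
    toAdd_mul, toAdd_inv, toAdd_ofAdd] at hg ⊢
  rcases hg with hg | ⟨hg, hpos⟩
  · exact Or.inr (Or.inl hg)
  · rcases eq_or_lt_of_le (Int.add_one_le_iff.2 hpos) with h1 | h1
    · left
      rw [eq_zpow_of_kerPart_eq_one hg, ← h1, zero_add, zpow_one]
    · exact Or.inr (Or.inr ⟨hg, by omega⟩)

end DiscreteCone

namespace Magnus

variable {σ : Type*}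

def conv (f g : List σ → ℤ) (m : List σ) : ℤ :=
  ∑ k ∈ Finset.range (m.length + 1), f (m.take k) * g (m.drop k)

def oneCoeff : List σ → ℤ
  | [] => 1
  | _ :: _ => 0

theorem conv_nil (f g : List σ → ℤ) : conv f g [] = f [] * g [] := by
  simp [conv]

theorem conv_cons (f g : List σ → ℤ) (x : σ) (m : List σ) :
    conv f g (x :: m) = f [] * g (x :: m) + conv (fun s => f (x :: s)) g m := by
  rw [conv, List.length_cons, Finset.sum_range_succ']
  simp [conv, add_comm]

theorem conv_eq_zero_of_left {f : List σ → ℤ} (g : List σ → ℤ) (hf : ∀ p, f p = 0)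
    (m : List σ) : conv f g m = 0 :=
  Finset.sum_eq_zero fun k _ => by rw [hf, zero_mul]

theorem conv_add_left (f₁ f₂ g : List σ → ℤ) (m : List σ) :
    conv (fun s => f₁ s + f₂ s) g m = conv f₁ g m + conv f₂ g m := by
  simp [conv, add_mul, Finset.sum_add_distrib]

theorem conv_add_right (f g₁ g₂ : List σ → ℤ) (m : List σ) :
    conv f (fun s => g₁ s + g₂ s) m = conv f g₁ m + conv f g₂ m := by
  simp [conv, mul_add, Finset.sum_add_distrib]

theorem conv_const_mul_left (c : ℤ) (f g : List σ → ℤ) (m : List σ) :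
    conv (fun s => c * f s) g m = c * conv f g m := by
  simp [conv, Finset.mul_sum, mul_assoc]

theorem conv_oneCoeff_left (g : List σ → ℤ) (m : List σ) : conv oneCoeff g m = g m := by
  cases m with
  | nil => simp [conv_nil, oneCoeff]
  | cons x m =>
    rw [conv_cons, conv_eq_zero_of_left (f := fun s => oneCoeff (x :: s)) g (fun _ => rfl)]
    simp [oneCoeff]

theorem conv_oneCoeff_right (g : List σ → ℤ) (m : List σ) : conv g oneCoeff m = g m := by
  induction m generalizing g with
  | nil => simp [conv_nil, oneCoeff]
  | cons x m ih =>
    rw [conv_cons, ih]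
    simp [oneCoeff]

theorem conv_assoc (f g h : List σ → ℤ) (m : List σ) :
    conv (conv f g) h m = conv f (conv g h) m := by
  induction m generalizing f with
  | nil => simp [conv_nil, mul_assoc]
  | cons x m ih =>
    simp only [conv_cons, conv_add_left, conv_const_mul_left, ih, conv_nil]
    ring

/-- Noncommutative power series over `ℤ` in the letters `σ`, indexed by monomials (words). -/
@[ext]
structure Series (σ : Type*) where
  coeff : List σ → ℤ

instance : Monoid (Series σ) where
  mul f g := ⟨conv f.coeff g.coeff⟩
  one := ⟨oneCoeff⟩
  mul_assoc f g h := Series.ext (funext (conv_assoc f.coeff g.coeff h.coeff))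
  one_mul f := Series.ext (funext (conv_oneCoeff_left f.coeff))
  mul_one f := Series.ext (funext (conv_oneCoeff_right f.coeff))

@[simp] theorem Series.coeff_mul (f g : Series σ) : (f * g).coeff = conv f.coeff g.coeff := rfl

@[simp] theorem Series.coeff_one : (1 : Series σ).coeff = oneCoeff := rfl

def constCoeff : Series σ →* ℤ where
  toFun f := f.coeff []
  map_one' := rfl
  map_mul' f g := conv_nil f.coeff g.coeff

theorem Series.coeff_singleton_mul {f g : Series σ} (hf : f.coeff [] = 1) (hg : g.coeff [] = 1)
    (x : σ) : (f * g).coeff [x] = f.coeff [x] + g.coeff [x] := by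
  simp [conv_cons, conv_nil, hf, hg, add_comm]

def syllableProd (M : List (σ × ℤ)) : FreeGroup σ :=
  (M.map fun p => FreeGroup.of p.1 ^ p.2).prod

theorem syllableProd_cons (p : σ × ℤ) (M : List (σ × ℤ)) :
    syllableProd (p :: M) = FreeGroup.of p.1 ^ p.2 * syllableProd M := rfl

/-- Read off from the reduced word of `g` in the free product of copies of `FreeGroup Unit`. -/
theorem exists_syllableProd_eq (g : FreeGroup σ) :
    ∃ M : List (σ × ℤ), M.IsChain (fun p q => p.1 ≠ q.1) ∧ (∀ p ∈ M, p.2 ≠ 0) ∧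
      syllableProd M = g := by
  classical
  set w := Monoid.CoprodI.Word.equiv (freeGroupEquivCoprodI g)
  have hsyl (l : Σ _ : σ, FreeGroup Unit) :
      FreeGroup.of () ^ FreeGroup.equivIntOfUnique l.2 = l.2 :=
    FreeGroup.equivIntOfUnique.left_inv l.2
  refine ⟨w.toList.map fun l => (l.1, FreeGroup.equivIntOfUnique l.2),
    List.isChain_map _ |>.2 w.chain_ne, ?_, ?_⟩
  · simp only [List.mem_map]
    rintro _ ⟨l, hl, rfl⟩ (h0 : FreeGroup.equivIntOfUnique l.2 = 0)
    exact w.ne_one l hl (by rw [← hsyl l, h0, zpow_zero])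
  · apply freeGroupEquivCoprodI.injective
    have hw : w.prod = freeGroupEquivCoprodI g := Monoid.CoprodI.Word.equiv.symm_apply_apply _
    rw [← hw, Monoid.CoprodI.Word.prod, syllableProd, map_list_prod, List.map_map, List.map_map]
    refine congrArg List.prod (List.map_congr_left fun l _ => ?_)
    conv_rhs => rw [← hsyl l]
    simp [map_zpow]

def WordLt : List σ → List σ → Prop :=
  InvImage (Prod.Lex (· < ·) WellOrderingRel) fun m => (m.length, m)

instance : IsWellOrder (List σ) WordLt :=
  RelEmbedding.isWellOrder ⟨⟨fun m => (m.length, m), fun _ _ h => congrArg Prod.snd h⟩, Iff.rfl⟩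

theorem wordLt_of_length_lt {m m' : List σ} (h : m.length < m'.length) : WordLt m m' :=
  Prod.Lex.left _ _ h

def VanishesBelow (d : List σ → ℤ) (m₀ : List σ) : Prop :=
  ∀ m, WordLt m m₀ → d m = 0

def LeadingPos (d : List σ → ℤ) : Prop :=
  ∃ m₀, 0 < d m₀ ∧ VanishesBelow d m₀

theorem exists_vanishesBelow {d : List σ → ℤ} (hd : ∃ m, d m ≠ 0) :
    ∃ m₀, d m₀ ≠ 0 ∧ VanishesBelow d m₀ := by
  obtain ⟨m₀, hm₀, hmin⟩ := (IsWellFounded.wf (r := @WordLt σ)).has_min {m | d m ≠ 0} hd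
  exact ⟨m₀, hm₀, fun m hm => not_not.1 fun h => hmin m h hm⟩

theorem VanishesBelow.conv_right {d : List σ → ℤ} {m₀ : List σ} (hd : VanishesBelow d m₀)
    {w : List σ → ℤ} (hw : w [] = 1) : conv d w m₀ = d m₀ ∧ VanishesBelow (conv d w) m₀ := by
  have hprefix {m : List σ} {k : ℕ} (hm : m = m₀ ∨ WordLt m m₀) (hk : k < m.length) :
      d (m.take k) = 0 :=
    hd _ <| hm.elim (fun h => h ▸ wordLt_of_length_lt (by simp; omega))
      (_root_.trans (wordLt_of_length_lt (by simp; omega)))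
  constructor
  · rw [conv, Finset.sum_range_succ, List.take_length, List.drop_length, hw, mul_one,
      Finset.sum_eq_zero fun k hk => by rw [hprefix (.inl rfl) (Finset.mem_range.1 hk), zero_mul],
      zero_add]
  · intro m hm
    rw [conv, Finset.sum_range_succ, List.take_length, hd m hm, zero_mul, add_zero]
    exact Finset.sum_eq_zero fun k hk => by
      rw [hprefix (.inr hm) (Finset.mem_range.1 hk), zero_mul]

theorem VanishesBelow.conv_left {d : List σ → ℤ} {m₀ : List σ} (hd : VanishesBelow d m₀)
    {w : List σ → ℤ} (hw : w [] = 1) : conv w d m₀ = d m₀ ∧ VanishesBelow (conv w d) m₀ := by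
  have hsuffix {m : List σ} {k : ℕ} (hm : m = m₀ ∨ WordLt m m₀) (hk : k < m.length) :
      d (m.drop (k + 1)) = 0 :=
    hd _ <| hm.elim (fun h => h ▸ wordLt_of_length_lt (by simp; omega))
      (_root_.trans (wordLt_of_length_lt (by simp; omega)))
  constructor
  · rw [conv, Finset.sum_range_succ', List.take_zero, List.drop_zero, hw, one_mul,
      Finset.sum_eq_zero fun k hk => by rw [hsuffix (.inl rfl) (Finset.mem_range.1 hk), mul_zero],
      zero_add]
  · intro m hm
    rw [conv, Finset.sum_range_succ', List.drop_zero, hd m hm, mul_zero, add_zero]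
    exact Finset.sum_eq_zero fun k hk => by
      rw [hsuffix (.inr hm) (Finset.mem_range.1 hk), mul_zero]

theorem LeadingPos.conv_right {d w : List σ → ℤ} (hd : LeadingPos d) (hw : w [] = 1) :
    LeadingPos (conv d w) :=
  let ⟨m₀, hpos, hbelow⟩ := hd
  ⟨m₀, (hbelow.conv_right hw).1 ▸ hpos, (hbelow.conv_right hw).2⟩

theorem LeadingPos.conv_left {d w : List σ → ℤ} (hd : LeadingPos d) (hw : w [] = 1) :
    LeadingPos (conv w d) :=
  let ⟨m₀, hpos, hbelow⟩ := hd
  ⟨m₀, (hbelow.conv_left hw).1 ▸ hpos, (hbelow.conv_left hw).2⟩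

theorem LeadingPos.add {d e : List σ → ℤ} (hd : LeadingPos d) (he : LeadingPos e) :
    LeadingPos (d + e) := by
  obtain ⟨m₁, hpos₁, hbelow₁⟩ := hd
  obtain ⟨m₂, hpos₂, hbelow₂⟩ := he
  rcases trichotomous_of WordLt m₁ m₂ with h | rfl | h
  · exact ⟨m₁, by rw [Pi.add_apply, hbelow₂ m₁ h]; omega,
      fun m hm => by rw [Pi.add_apply, hbelow₁ m hm, hbelow₂ m (_root_.trans hm h), add_zero]⟩
  · exact ⟨m₁, by rw [Pi.add_apply]; omega,
      fun m hm => by rw [Pi.add_apply, hbelow₁ m hm, hbelow₂ m hm, add_zero]⟩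
  · exact ⟨m₂, by rw [Pi.add_apply, hbelow₁ m₂ h]; omega,
      fun m hm => by rw [Pi.add_apply, hbelow₁ m (_root_.trans hm h), hbelow₂ m hm, add_zero]⟩

variable [DecidableEq σ]

def genCoeff (j : σ) : List σ → ℤ
  | [] => 1
  | [x] => if x = j then 1 else 0
  | _ :: _ :: _ => 0

/-- Coefficients of `(1 + X_j)⁻¹ = ∑ (-X_j)^k`. -/
def genInvCoeff (j : σ) (m : List σ) : ℤ :=
  if ∀ x ∈ m, x = j then (-1) ^ m.length else 0

theorem genCoeff_cons_self (j : σ) (m : List σ) : genCoeff j (j :: m) = oneCoeff m := by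
  cases m <;> simp [genCoeff, oneCoeff]

theorem genCoeff_cons_of_ne {j x : σ} (hx : x ≠ j) (m : List σ) : genCoeff j (x :: m) = 0 := by
  cases m <;> simp [genCoeff, hx]

theorem genInvCoeff_cons_self (j : σ) (m : List σ) :
    genInvCoeff j (j :: m) = -genInvCoeff j m := by
  by_cases h : ∀ x ∈ m, x = j
  · have hj : ∀ x ∈ j :: m, x = j := by simpa using h
    simp only [genInvCoeff, if_pos h, if_pos hj, List.length_cons, pow_succ]
    ring
  · simp [genInvCoeff, h]

theorem genInvCoeff_cons_of_ne {j x : σ} (hx : x ≠ j) (m : List σ) :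
    genInvCoeff j (x :: m) = 0 := by
  simp [genInvCoeff, hx]

theorem conv_genCoeff_genInvCoeff (j : σ) (m : List σ) :
    conv (genCoeff j) (genInvCoeff j) m = oneCoeff m := by
  cases m with
  | nil => simp [conv_nil, genCoeff, genInvCoeff, oneCoeff]
  | cons x m =>
    rw [conv_cons]
    by_cases hx : x = j
    · subst hx
      simp only [genCoeff_cons_self, conv_oneCoeff_left, genInvCoeff_cons_self]
      simp [genCoeff, oneCoeff]
    · rw [conv_eq_zero_of_left _ (genCoeff_cons_of_ne hx), genInvCoeff_cons_of_ne hx]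
      simp [oneCoeff]

theorem conv_genInvCoeff_genCoeff (j : σ) (m : List σ) :
    conv (genInvCoeff j) (genCoeff j) m = oneCoeff m := by
  induction m with
  | nil => simp [conv_nil, genCoeff, genInvCoeff, oneCoeff]
  | cons x m ih =>
    rw [conv_cons]
    by_cases hx : x = j
    · subst hx
      have hneg : (fun s => genInvCoeff x (x :: s)) = fun s => -1 * genInvCoeff x s :=
        funext fun s => by rw [genInvCoeff_cons_self]; ring
      rw [hneg, conv_const_mul_left, ih, genCoeff_cons_self]
      cases m <;> simp [genInvCoeff, oneCoeff]
    · rw [conv_eq_zero_of_left _ (genInvCoeff_cons_of_ne hx), genCoeff_cons_of_ne hx]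
      simp [oneCoeff]

def gen (j : σ) : (Series σ)ˣ where
  val := ⟨genCoeff j⟩
  inv := ⟨genInvCoeff j⟩
  val_inv := Series.ext (funext (conv_genCoeff_genInvCoeff j))
  inv_val := Series.ext (funext (conv_genInvCoeff_genCoeff j))

def univariate (j : σ) : Submonoid (Series σ) where
  carrier := {f | ∀ m, (¬∀ x ∈ m, x = j) → f.coeff m = 0}
  one_mem' := by
    rintro (_ | ⟨x, m⟩) hm
    · simp at hm
    · rfl
  mul_mem' := by
    intro f g hf hg m hm
    show conv f.coeff g.coeff m = 0
    refine Finset.sum_eq_zero fun k _ => ?_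
    by_cases htake : ∀ x ∈ m.take k, x = j
    · have hdrop : ¬∀ x ∈ m.drop k, x = j := fun hdrop => hm fun x hx => by
        rw [← List.take_append_drop k m, List.mem_append] at hx
        exact hx.elim (htake x) (hdrop x)
      rw [hg _ hdrop, mul_zero]
    · rw [hf _ htake, zero_mul]

theorem gen_mem_units_univariate (j : σ) : gen j ∈ (univariate j).units := by
  refine (Submonoid.mem_units_iff _ _).2 ⟨?_, fun m hm => if_neg hm⟩
  rintro (_ | ⟨x, _ | ⟨y, m⟩⟩) hm
  · simp at hm
  · exact if_neg (by simpa using hm)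
  · rfl

theorem coeff_gen_zpow_of_not_forall (j : σ) (e : ℤ) {m : List σ} (hm : ¬∀ x ∈ m, x = j) :
    (gen j ^ e).val.coeff m = 0 :=
  ((Submonoid.mem_units_iff _ _).1 (zpow_mem (gen_mem_units_univariate j) e)).1 m hm

def magnus : FreeGroup σ →* (Series σ)ˣ := FreeGroup.lift gen

@[simp] theorem magnus_of (j : σ) : magnus (FreeGroup.of j) = gen j := FreeGroup.lift_apply_of

theorem coeff_nil_magnus (g : FreeGroup σ) : (magnus g).val.coeff [] = 1 := by
  have : (Units.map constCoeff).comp magnus = (1 : FreeGroup σ →* ℤˣ) :=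
    FreeGroup.ext_hom _ _ fun _ => Units.ext rfl
  exact congrArg Units.val (DFunLike.congr_fun this g)

theorem coeff_gen_zpow_singleton (j : σ) (e : ℤ) : (gen j ^ e).val.coeff [j] = e := by
  have hnil (k : ℤ) : (gen j ^ k).val.coeff [] = 1 := by
    rw [← magnus_of, ← map_zpow]; exact coeff_nil_magnus _
  induction e using Int.induction_on with
  | zero => rfl
  | succ k ih =>
    rw [zpow_add_one, Units.val_mul, Series.coeff_singleton_mul (hnil _) rfl, ih]
    simp [gen, genCoeff]
  | pred k ih =>
    rw [zpow_sub_one, ← zpow_neg_one, Units.val_mul,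
      Series.coeff_singleton_mul (hnil _) (hnil _), ih, zpow_neg_one]
    simp [gen, genInvCoeff, sub_eq_add_neg]

theorem magnus_syllableProd_cons (p : σ × ℤ) (M : List (σ × ℤ)) :
    magnus (syllableProd (p :: M)) = gen p.1 ^ p.2 * magnus (syllableProd M) := by
  rw [syllableProd_cons, map_mul, map_zpow, magnus_of]

theorem coeff_magnus_syllableProd_of_length_lt (M : List (σ × ℤ)) {q : List σ}
    (hq : q.IsChain (· ≠ ·)) (hlen : M.length < q.length) :
    (magnus (syllableProd M)).val.coeff q = 0 := by
  induction M generalizing q with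
  | nil =>
    obtain _ | ⟨x, q⟩ := q
    · simp at hlen
    · rfl
  | cons p M ih =>
    obtain _ | ⟨x, _ | ⟨y, q⟩⟩ := q
    · simp at hlen
    · simp at hlen
    obtain ⟨hxy, hq'⟩ := List.isChain_cons_cons.1 hq
    simp only [List.length_cons] at hlen
    have hxyq (s : List σ) : ¬∀ z ∈ x :: y :: s, z = p.1 := fun h =>
      hxy ((h x (by simp)).trans (h y (by simp)).symm)
    rw [magnus_syllableProd_cons, Units.val_mul, Series.coeff_mul, conv_cons, conv_cons,
      ih hq (by simp; omega), ih hq' (by simp; omega),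
      conv_eq_zero_of_left _ fun s => coeff_gen_zpow_of_not_forall _ _ (hxyq s)]
    ring

theorem coeff_magnus_syllableProd (M : List (σ × ℤ)) (hM : M.IsChain (fun p q => p.1 ≠ q.1)) :
    (magnus (syllableProd M)).val.coeff (M.map Prod.fst) = (M.map Prod.snd).prod := by
  induction M with
  | nil => rfl
  | cons p M ih =>
    have hfst : (p.1 :: M.map Prod.fst).IsChain (· ≠ ·) := by
      rw [← List.map_cons, List.isChain_map]
      exact hM
    rw [magnus_syllableProd_cons, Units.val_mul, Series.coeff_mul, List.map_cons, conv_cons,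
      coeff_magnus_syllableProd_of_length_lt M hfst (by simp)]
    obtain _ | ⟨p', M⟩ := M
    · simp [conv_nil, coeff_gen_zpow_singleton, coeff_nil_magnus]
    · obtain ⟨hpp', hM'⟩ := List.isChain_cons_cons.1 hM
      have hne : ∀ s, ¬∀ z ∈ p.1 :: p'.1 :: s, z = p.1 := fun s h => hpp' (h p'.1 (by simp)).symm
      rw [List.map_cons, conv_cons, coeff_gen_zpow_singleton,
        conv_eq_zero_of_left _ fun s => coeff_gen_zpow_of_not_forall _ _ (hne s),
        ← List.map_cons, ih hM']
      simp

theorem magnus_injective : Function.Injective (magnus : FreeGroup σ →* (Series σ)ˣ) := by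
  refine (injective_iff_map_eq_one _).2 fun g hg => ?_
  obtain ⟨M, hchain, hne, rfl⟩ := exists_syllableProd_eq g
  obtain _ | ⟨p, M'⟩ := M
  · rfl
  have hcoeff := coeff_magnus_syllableProd _ hchain
  rw [hg] at hcoeff
  exact absurd hcoeff.symm (List.prod_ne_zero fun h0 => by
    obtain ⟨q, hq, hq0⟩ := List.mem_map.1 h0
    exact hne q hq hq0)

def magnusCoeff (g : FreeGroup σ) : List σ → ℤ :=
  (magnus g).val.coeff - oneCoeff

theorem coeff_magnus (g : FreeGroup σ) :
    (magnus g).val.coeff = fun m => magnusCoeff g m + oneCoeff m := by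
  simp [magnusCoeff]

theorem conv_coeff_magnus_right (d : List σ → ℤ) (g : FreeGroup σ) :
    conv (magnus g).val.coeff d = fun m => conv (magnusCoeff g) d m + d m := by
  rw [coeff_magnus]
  exact funext fun m => by rw [conv_add_left, conv_oneCoeff_left]

theorem magnusCoeff_one : magnusCoeff (1 : FreeGroup σ) = 0 := by
  simp [magnusCoeff]

theorem magnusCoeff_mul (g h : FreeGroup σ) :
    magnusCoeff (g * h) = conv (magnusCoeff g) (magnus h).val.coeff + magnusCoeff h := by
  rw [magnusCoeff, map_mul, Units.val_mul, Series.coeff_mul, conv_coeff_magnus_right,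
    coeff_magnus h]
  ext m
  simp only [Pi.sub_apply, Pi.add_apply]
  ring

theorem magnusCoeff_inv (g : FreeGroup σ) :
    magnusCoeff g⁻¹ = -conv (magnusCoeff g) (magnus g⁻¹).val.coeff := by
  have h := magnusCoeff_mul g g⁻¹
  rw [mul_inv_cancel, magnusCoeff_one] at h
  exact (neg_eq_of_add_eq_zero_right h.symm).symm

theorem magnusCoeff_conj (g h : FreeGroup σ) :
    magnusCoeff (g * h * g⁻¹) =
      conv (magnus g).val.coeff (conv (magnusCoeff h) (magnus g⁻¹).val.coeff) := by
  have hinv : conv (magnus g).val.coeff (magnus g⁻¹).val.coeff = oneCoeff := by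
    rw [← Series.coeff_mul, ← Units.val_mul, ← map_mul, mul_inv_cancel, map_one]; rfl
  ext m
  rw [magnusCoeff, mul_assoc, map_mul, map_mul, Units.val_mul, Units.val_mul, Series.coeff_mul,
    Series.coeff_mul, conv_coeff_magnus_right (magnus g⁻¹).val.coeff h, Pi.sub_apply,
    conv_add_right, hinv, add_sub_cancel_right]

def magnusCone : Set (FreeGroup σ) :=
  {g | LeadingPos (magnusCoeff g)}

theorem isPositiveCone_magnusCone : IsPositiveCone (magnusCone : Set (FreeGroup σ)) where
  one_notMem := by
    rintro ⟨m₀, hpos, -⟩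
    simp [magnusCoeff_one] at hpos
  mul_mem {g h} hg hh := by
    change LeadingPos _
    rw [magnusCoeff_mul]
    exact (LeadingPos.conv_right hg (coeff_nil_magnus h)).add hh
  mem_or_inv_mem {g} hg := by
    have hne : ∃ m, magnusCoeff g m ≠ 0 := by
      by_contra! h0
      refine hg (magnus_injective (Units.ext (Series.ext ?_)))
      rw [coeff_magnus, map_one]
      exact funext fun m => by rw [h0, zero_add]; rfl
    obtain ⟨m₀, hm₀, hbelow⟩ := exists_vanishesBelow hne
    rcases hm₀.lt_or_gt with hneg | hpos
    · obtain ⟨hlead, hbelow'⟩ := hbelow.conv_right (coeff_nil_magnus g⁻¹)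
      refine Or.inr ⟨m₀, ?_, fun m hm => ?_⟩
      · rw [magnusCoeff_inv, Pi.neg_apply, hlead]
        omega
      · rw [magnusCoeff_inv, Pi.neg_apply, hbelow' m hm, neg_zero]
    · exact Or.inl ⟨m₀, hpos, hbelow⟩

theorem conj_mem_magnusCone (g : FreeGroup σ) {h : FreeGroup σ} (hh : h ∈ magnusCone) :
    g * h * g⁻¹ ∈ magnusCone := by
  change LeadingPos _
  rw [magnusCoeff_conj]
  exact (LeadingPos.conv_right hh (coeff_nil_magnus g⁻¹)).conv_left (coeff_nil_magnus g)

end Magnus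

theorem stmt12 (n : ℕ) (hn : 2 ≤ n) :
    ∃ r : FreeGroup (Fin n) → FreeGroup (Fin n) → Prop,
      IsRightOrder r ∧ ∃ a : FreeGroup (Fin n), LeastPos r a := by
  let i₀ : Fin n := ⟨0, by omega⟩
  let φ : FreeGroup (Fin n) →* Multiplicative ℤ :=
    FreeGroup.lift (Pi.mulSingle i₀ (Multiplicative.ofAdd 1))
  have hφ : φ (FreeGroup.of i₀) = Multiplicative.ofAdd 1 := by simp [φ]
  have hcone := isPositiveCone_discreteCone (φ := φ) (a := FreeGroup.of i₀)
    Magnus.isPositiveCone_magnusCone Magnus.conj_mem_magnusCone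
  exact ⟨_, hcone.isRightOrder, _, leastPos_of_eq_or_mul_inv_mem (mem_discreteCone_self hφ _)
    fun _ hg => eq_or_mul_inv_mem_discreteCone hφ hg⟩
end

section
/- The Klein bottle group D = ⟨a, b | b⁻¹ab = a⁻¹⟩ has exactly four right-orders, and each of them is discrete with a or a⁻¹ as the minimal positive element. -/
variable {G : Type*} [Group G]

/-- The single defining relation `b * a * b⁻¹ * a` of the Klein bottle group,
with `b = of true` and `a = of false`; it says `b a b⁻¹ = a⁻¹`. -/
def kleinRels : Set (FreeGroup Bool) :=
  {FreeGroup.of true * FreeGroup.of false * (FreeGroup.of true)⁻¹ * FreeGroup.of false}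

/-- The Klein bottle group `D = ⟨a, b | b a b⁻¹ = a⁻¹⟩`. -/
abbrev KleinBottleGroup := PresentedGroup kleinRels

/-!
The Klein bottle group is `ℤ ⋊ ℤ`: every element is uniquely `a ^ m * b ^ n`. Given a right
order, pick signs `ε, δ` with `a ^ ε` and `b ^ δ` positive. Since
`(a ^ m * b ^ δ) ^ 2 = b ^ (2 * δ)`, every `a ^ m * b ^ δ` is positive too, so the positive
cone, closed under products, contains the lexicographic cone
`{δ * n > 0} ∪ {n = 0, ε * m > 0}`; both cones are halves of the group, hence they coincide.
So the right orders are the four lexicographic ones, and `a ^ ε` is least positive in each.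
-/

open SemidirectProduct Multiplicative

theorem Int.units_eq_of_pos_iff {u v : ℤˣ} (h : 0 < (u : ℤ) ↔ 0 < (v : ℤ)) : u = v := by
  rcases Int.units_eq_one_or u with rfl | rfl <;> rcases Int.units_eq_one_or v with rfl | rfl <;>
    simp_all

def coneOrder (P : G → Prop) (f g : G) : Prop := P (g * f⁻¹)

theorem coneOrder_one_left {P : G → Prop} {g : G} : coneOrder P 1 g ↔ P g := by
  simp [coneOrder]

theorem isRightOrder_coneOrder {P : G → Prop} (mul_mem : ∀ x y, P x → P y → P (x * y))
    (not_one : ¬ P 1) (total : ∀ x, P x ∨ x = 1 ∨ P x⁻¹) : IsRightOrder (coneOrder P) := by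
  refine ⟨{ trichotomous := ?_, irrefl := ?_, trans := ?_ }, ?_⟩
  · intro f g hfg hgf
    rcases total (g * f⁻¹) with h | h | h
    · exact absurd h hfg
    · exact (mul_inv_eq_one.mp h).symm
    · exact absurd (by simpa [coneOrder] using h) hgf
  · exact fun f hf => not_one (by simpa [coneOrder] using hf)
  · exact fun f g h hfg hgh => by simpa [coneOrder, mul_assoc] using mul_mem _ _ hgh hfg
  · exact fun f g h hfg => by simpa [coneOrder, mul_assoc] using hfg

namespace IsRightOrder

variable {r : G → G → Prop}

theorem one_lt_mul_inv_iff (hr : IsRightOrder r) {f g : G} : r 1 (g * f⁻¹) ↔ r f g :=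
  ⟨fun h => by simpa using hr.2 _ _ f h, fun h => by simpa using hr.2 _ _ f⁻¹ h⟩

theorem one_lt_mul_s14 (hr : IsRightOrder r) {x y : G} (hx : r 1 x) (hy : r 1 y) : r 1 (x * y) :=
  hr.1.trans _ _ _ hy (by simpa using hr.2 _ _ y hx)

theorem not_one_lt_inv (hr : IsRightOrder r) {x : G} (hx : r 1 x) : ¬ r 1 x⁻¹ := fun hx' =>
  hr.1.irrefl 1 (by simpa using hr.one_lt_mul_s14 hx hx')

theorem one_lt_or_one_lt_inv (hr : IsRightOrder r) {x : G} (hx : x ≠ 1) : r 1 x ∨ r 1 x⁻¹ := by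
  have := hr.1
  rcases trichotomous_of r 1 x with h | rfl | h
  · exact .inl h
  · exact absurd rfl hx
  · exact .inr (by simpa using hr.2 _ _ x⁻¹ h)

theorem exists_one_lt_zpow_units (hr : IsRightOrder r) {x : G} (hx : x ≠ 1) :
    ∃ ε : ℤˣ, r 1 (x ^ (ε : ℤ)) := by
  rcases hr.one_lt_or_one_lt_inv hx with h | h
  · exact ⟨1, by simpa using h⟩
  · exact ⟨-1, by simpa using h⟩

theorem one_lt_zpow (hr : IsRightOrder r) {x : G} (hx : r 1 x) {t : ℤ} (ht : 0 < t) :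
    r 1 (x ^ t) := by
  obtain ht : 1 ≤ t := ht
  induction t, ht using Int.leInduction with
  | base => simpa using hx
  | succ t _ ih => rw [zpow_add_one]; exact hr.one_lt_mul_s14 ih hx

theorem one_lt_of_mul_self_eq (hr : IsRightOrder r) {x y : G} (hy : r 1 y) (h : x * x = y * y) :
    r 1 x := by
  have hyy := hr.one_lt_mul_s14 hy hy
  have hx : x ≠ 1 := by
    rintro rfl
    exact hr.1.irrefl 1 (by simpa [← h] using hyy)
  refine (hr.one_lt_or_one_lt_inv hx).resolve_right fun hx' => hr.not_one_lt_inv hyy ?_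
  have := hr.one_lt_mul_s14 hx' hx'
  rwa [← mul_inv_rev, h] at this

theorem eq_coneOrder (hr : IsRightOrder r) {P : G → Prop} (total : ∀ x, P x ∨ x = 1 ∨ P x⁻¹)
    (one_lt : ∀ x, P x → r 1 x) : r = coneOrder P := by
  funext f g
  refine propext (hr.one_lt_mul_inv_iff.symm.trans ⟨fun h => ?_, one_lt _⟩)
  rcases total (g * f⁻¹) with hx | hx | hx
  · exact hx
  · exact absurd (hx ▸ h) (hr.1.irrefl 1)
  · exact absurd (one_lt _ hx) (hr.not_one_lt_inv h)

end IsRightOrder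

namespace KleinBottleGroup

def a : KleinBottleGroup := PresentedGroup.of false
def b : KleinBottleGroup := PresentedGroup.of true

theorem b_mul_a_mul_b_inv : b * a * b⁻¹ = a⁻¹ := by
  have h : PresentedGroup.mk kleinRels
      (FreeGroup.of true * FreeGroup.of false * (FreeGroup.of true)⁻¹ * FreeGroup.of false) = 1 :=
    (QuotientGroup.eq_one_iff _).mpr (Subgroup.subset_normalClosure rfl)
  simp only [map_mul, map_inv] at h
  exact mul_eq_one_iff_eq_inv.mp h

def negAction : Multiplicative ℤ →* MulAut (Multiplicative ℤ) :=
  zpowersHom _ (MulEquiv.inv _)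

def toSemidirect : KleinBottleGroup →* Multiplicative ℤ ⋊[negAction] Multiplicative ℤ :=
  PresentedGroup.toGroup (f := fun | false => inl (ofAdd 1) | true => inr (ofAdd 1)) <| by
    rintro _ rfl
    ext <;> rfl

theorem conj_b_a : MulAut.conj b a = a⁻¹ := b_mul_a_mul_b_inv

theorem conj_b_inv_a : (MulAut.conj b)⁻¹ a = a⁻¹ := by
  rw [MulAut.inv_apply, MulEquiv.symm_apply_eq, map_inv, conj_b_a, inv_inv]

def ofSemidirect : Multiplicative ℤ ⋊[negAction] Multiplicative ℤ →* KleinBottleGroup :=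
  lift (zpowersHom _ a) (zpowersHom _ b) fun n => by
    refine MonoidHom.ext_mint ?_
    induction n using Multiplicative.rec with | _ k => ?_
    simp only [negAction, MonoidHom.comp_apply, zpowersHom_apply, toAdd_ofAdd,
      MulEquiv.coe_toMonoidHom, map_zpow, zpow_one]
    induction k using Int.induction_on with
    | zero => simp
    | succ k ih =>
      rw [zpow_add_one, zpow_add_one, MulAut.mul_apply, MulAut.mul_apply, MulEquiv.inv_apply,
        map_inv, toAdd_inv, zpow_neg, ih, conj_b_a, map_inv]
    | pred k ih =>
      rw [zpow_sub_one, zpow_sub_one, MulAut.mul_apply, MulAut.mul_apply, MulAut.inv_apply,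
        MulEquiv.inv_symm, MulEquiv.inv_apply, map_inv, toAdd_inv, zpow_neg, ih, conj_b_inv_a,
        map_inv]

theorem toSemidirect_a : toSemidirect a = inl (ofAdd 1) := PresentedGroup.toGroup.of _

theorem toSemidirect_b : toSemidirect b = inr (ofAdd 1) := PresentedGroup.toGroup.of _

def equivSemidirect : KleinBottleGroup ≃* Multiplicative ℤ ⋊[negAction] Multiplicative ℤ :=
  toSemidirect.toMulEquiv ofSemidirect
    (PresentedGroup.ext fun
      | false => (by simp [ofSemidirect, toSemidirect_a] : ofSemidirect (toSemidirect a) = a)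
      | true => (by simp [ofSemidirect, toSemidirect_b] : ofSemidirect (toSemidirect b) = b))
    (hom_ext (MonoidHom.ext_mint <| by simp [ofSemidirect, toSemidirect_a])
      (MonoidHom.ext_mint <| by simp [ofSemidirect, toSemidirect_b]))

def aExp (g : KleinBottleGroup) : ℤ := toAdd (equivSemidirect g).left

def bExp (g : KleinBottleGroup) : ℤ := toAdd (equivSemidirect g).right

theorem equivSemidirect_symm_mk (m n : ℤ) :
    equivSemidirect.symm ⟨ofAdd m, ofAdd n⟩ = a ^ m * b ^ n := by
  rw [mk_eq_inl_mul_inr, map_mul]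
  simp [equivSemidirect, ofSemidirect]

theorem zpow_aExp_mul_zpow_bExp (g : KleinBottleGroup) : a ^ aExp g * b ^ bExp g = g := by
  rw [← equivSemidirect_symm_mk]
  exact equivSemidirect.symm_apply_apply g

@[simp] theorem aExp_zpow_mul_zpow (m n : ℤ) : aExp (a ^ m * b ^ n) = m := by
  simp [aExp, ← equivSemidirect_symm_mk]

@[simp] theorem bExp_zpow_mul_zpow (m n : ℤ) : bExp (a ^ m * b ^ n) = n := by
  simp [bExp, ← equivSemidirect_symm_mk]

@[simp] theorem aExp_a_zpow (m : ℤ) : aExp (a ^ m) = m := by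
  simpa using aExp_zpow_mul_zpow m 0

@[simp] theorem bExp_a_zpow (m : ℤ) : bExp (a ^ m) = 0 := by
  simpa using bExp_zpow_mul_zpow m 0

@[simp] theorem bExp_b_zpow (n : ℤ) : bExp (b ^ n) = n := by
  simpa using bExp_zpow_mul_zpow 0 n

@[simp] theorem aExp_a : aExp a = 1 := by simpa using aExp_a_zpow 1

@[simp] theorem bExp_a : bExp a = 0 := by simpa using bExp_a_zpow 1

@[simp] theorem bExp_b : bExp b = 1 := by simpa using bExp_b_zpow 1

@[simp] theorem aExp_one : aExp 1 = 0 := by simp [aExp]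

@[simp] theorem bExp_one : bExp 1 = 0 := by simp [bExp]

theorem bExp_mul (g h : KleinBottleGroup) : bExp (g * h) = bExp g + bExp h := by
  simp [bExp, mul_right]

theorem bExp_inv (g : KleinBottleGroup) : bExp g⁻¹ = -bExp g := by
  simp [bExp, inv_right]

theorem aExp_mul_of_bExp_eq_zero {g : KleinBottleGroup} (hg : bExp g = 0) (h : KleinBottleGroup) :
    aExp (g * h) = aExp g + aExp h := by
  rw [bExp, toAdd_eq_zero] at hg
  simp [aExp, mul_left, hg]

theorem aExp_inv_of_bExp_eq_zero {g : KleinBottleGroup} (hg : bExp g = 0) :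
    aExp g⁻¹ = -aExp g := by
  rw [bExp, toAdd_eq_zero] at hg
  simp [aExp, inv_left, hg]

theorem eq_one_of_aExp_of_bExp {g : KleinBottleGroup} (hm : aExp g = 0) (hn : bExp g = 0) :
    g = 1 := by
  rw [← zpow_aExp_mul_zpow_bExp g, hm, hn, zpow_zero, zpow_zero, mul_one]

theorem a_ne_one : a ≠ 1 := fun h => by simpa [h] using aExp_a

theorem b_ne_one : b ≠ 1 := fun h => by simpa [h] using bExp_b

theorem conj_b_zpow_units (δ : ℤˣ) : MulAut.conj (b ^ (δ : ℤ)) a = a⁻¹ := by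
  rcases Int.units_eq_one_or δ with rfl | rfl
  · simpa using conj_b_a
  · simpa using conj_b_inv_a

theorem a_zpow_mul_b_zpow_units_mul_self (m : ℤ) (δ : ℤˣ) :
    a ^ m * b ^ (δ : ℤ) * (a ^ m * b ^ (δ : ℤ)) = b ^ (δ : ℤ) * b ^ (δ : ℤ) := by
  calc a ^ m * b ^ (δ : ℤ) * (a ^ m * b ^ (δ : ℤ))
      = a ^ m * MulAut.conj (b ^ (δ : ℤ)) (a ^ m) * (b ^ (δ : ℤ) * b ^ (δ : ℤ)) := by
        rw [MulAut.conj_apply]; group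
    _ = b ^ (δ : ℤ) * b ^ (δ : ℤ) := by
        rw [map_zpow, conj_b_zpow_units, inv_zpow', ← zpow_add, add_neg_cancel, zpow_zero, one_mul]

-- The positive cone of the lexicographic order on `(δ * bExp g, ε * aExp g)`.
def cone (ε δ : ℤˣ) (g : KleinBottleGroup) : Prop :=
  0 < (δ : ℤ) * bExp g ∨ bExp g = 0 ∧ 0 < (ε : ℤ) * aExp g

theorem cone_mul {ε δ : ℤˣ} {x y : KleinBottleGroup} (hx : cone ε δ x) (hy : cone ε δ y) :
    cone ε δ (x * y) := by
  rcases hx with hx | ⟨hx0, hxm⟩ <;> rcases hy with hy | ⟨hy0, hym⟩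
  · exact .inl (by rw [bExp_mul, mul_add]; exact add_pos hx hy)
  · exact .inl (by rwa [bExp_mul, hy0, add_zero])
  · exact .inl (by rwa [bExp_mul, hx0, zero_add])
  · refine .inr ⟨by rw [bExp_mul, hx0, hy0, add_zero], ?_⟩
    rw [aExp_mul_of_bExp_eq_zero hx0, mul_add]
    exact add_pos hxm hym

theorem not_cone_one (ε δ : ℤˣ) : ¬ cone ε δ 1 := by
  simp [cone]

theorem cone_or_eq_one_or_cone_inv (ε δ : ℤˣ) (g : KleinBottleGroup) :
    cone ε δ g ∨ g = 1 ∨ cone ε δ g⁻¹ := by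
  by_cases hn : bExp g = 0
  · by_cases hm : aExp g = 0
    · exact .inr (.inl (eq_one_of_aExp_of_bExp hm hn))
    · rcases Int.units_eq_one_or ε with rfl | rfl <;>
        simp [cone, bExp_inv, aExp_inv_of_bExp_eq_zero hn, hn] <;> omega
  · rcases Int.units_eq_one_or δ with rfl | rfl <;> simp [cone, bExp_inv] <;> omega

theorem isRightOrder_coneOrder_cone (ε δ : ℤˣ) : IsRightOrder (coneOrder (cone ε δ)) :=
  isRightOrder_coneOrder (fun _ _ => cone_mul) (not_cone_one ε δ) (cone_or_eq_one_or_cone_inv ε δ)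

theorem one_lt_a_zpow_mul_b_zpow {r : KleinBottleGroup → KleinBottleGroup → Prop}
    (hr : IsRightOrder r) {δ : ℤˣ} (hb : r 1 (b ^ (δ : ℤ))) (m : ℤ) {k : ℤ} (hk : 0 < k) :
    r 1 (a ^ m * b ^ ((δ : ℤ) * k)) := by
  obtain hk : 1 ≤ k := hk
  induction k, hk using Int.leInduction with
  | base => rw [mul_one]; exact hr.one_lt_of_mul_self_eq hb (a_zpow_mul_b_zpow_units_mul_self m δ)
  | succ k _ ih => rw [mul_add_one, zpow_add, ← mul_assoc]; exact hr.one_lt_mul_s14 ih hb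

theorem one_lt_of_cone {r : KleinBottleGroup → KleinBottleGroup → Prop} (hr : IsRightOrder r)
    {ε δ : ℤˣ} (ha : r 1 (a ^ (ε : ℤ))) (hb : r 1 (b ^ (δ : ℤ))) {g : KleinBottleGroup}
    (hg : cone ε δ g) : r 1 g := by
  have units_mul_units_mul (u : ℤˣ) (x : ℤ) : (u : ℤ) * (u * x) = x := by
    rcases Int.units_eq_one_or u with rfl | rfl <;> simp
  rw [← zpow_aExp_mul_zpow_bExp g]
  rcases hg with hn | ⟨hn, hm⟩
  · rw [← units_mul_units_mul δ (bExp g)]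
    exact one_lt_a_zpow_mul_b_zpow hr hb _ hn
  · rw [hn, zpow_zero, mul_one, ← units_mul_units_mul ε (aExp g), zpow_mul]
    exact hr.one_lt_zpow ha hm

theorem exists_eq_coneOrder_cone {r : KleinBottleGroup → KleinBottleGroup → Prop}
    (hr : IsRightOrder r) : ∃ ε δ : ℤˣ, r = coneOrder (cone ε δ) := by
  obtain ⟨ε, ha⟩ := hr.exists_one_lt_zpow_units a_ne_one
  obtain ⟨δ, hb⟩ := hr.exists_one_lt_zpow_units b_ne_one
  exact ⟨ε, δ, hr.eq_coneOrder (cone_or_eq_one_or_cone_inv ε δ) fun g => one_lt_of_cone hr ha hb⟩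

theorem leastPos_coneOrder_cone (ε δ : ℤˣ) : LeastPos (coneOrder (cone ε δ)) (a ^ (ε : ℤ)) := by
  have bExp_mul_a_zpow_inv (g : KleinBottleGroup) : bExp (g * (a ^ (ε : ℤ))⁻¹) = bExp g := by
    rw [bExp_mul, bExp_inv, bExp_a_zpow, neg_zero, add_zero]
  refine ⟨coneOrder_one_left.mpr (.inr ⟨bExp_a_zpow _, ?_⟩), fun g hg => ?_⟩
  · rw [aExp_a_zpow, ← Units.val_mul, Int.units_mul_self, Units.val_one]
    exact one_pos
  rcases coneOrder_one_left.mp hg with hn | ⟨hn, hm⟩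
  · right
    exact .inl (by rwa [bExp_mul_a_zpow_inv])
  by_cases hε : aExp g = ε
  · left
    rw [← zpow_aExp_mul_zpow_bExp g, hε, hn, zpow_zero, mul_one]
  · right
    refine .inr ⟨by rw [bExp_mul_a_zpow_inv, hn], ?_⟩
    rw [aExp_mul_of_bExp_eq_zero hn, ← zpow_neg, aExp_a_zpow]
    rcases Int.units_eq_one_or ε with rfl | rfl <;> simp at hm hε ⊢ <;> omega

theorem coneOrder_cone_injective :
    Function.Injective fun p : ℤˣ × ℤˣ => coneOrder (cone p.1 p.2) := by
  rintro ⟨ε, δ⟩ ⟨ε', δ'⟩ h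
  have ha := congrFun₂ h 1 a
  have hb := congrFun₂ h 1 b
  simp only [coneOrder_one_left, cone, aExp_a, bExp_a, bExp_b, mul_zero, mul_one, lt_self_iff_false,
    true_and, false_or, one_ne_zero, false_and, or_false, eq_iff_iff] at ha hb
  exact Prod.ext (Int.units_eq_of_pos_iff ha) (Int.units_eq_of_pos_iff hb)

theorem setOf_isRightOrder_eq_range :
    {r : KleinBottleGroup → KleinBottleGroup → Prop | IsRightOrder r} =
      Set.range fun p : ℤˣ × ℤˣ => coneOrder (cone p.1 p.2) := by
  ext r
  constructor
  · intro hr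
    obtain ⟨ε, δ, rfl⟩ := exists_eq_coneOrder_cone hr
    exact ⟨(ε, δ), rfl⟩
  · rintro ⟨⟨ε, δ⟩, rfl⟩
    exact isRightOrder_coneOrder_cone ε δ

end KleinBottleGroup

open KleinBottleGroup in
/-- The Klein bottle group has exactly four right orders, and each of them is discrete
with `a` or `a⁻¹` as the minimal positive element. -/
theorem stmt14 :
    ({r : KleinBottleGroup → KleinBottleGroup → Prop | IsRightOrder r}.ncard = 4) ∧
    ∀ r : KleinBottleGroup → KleinBottleGroup → Prop, IsRightOrder r →
      LeastPos r (PresentedGroup.of (rels := kleinRels) false) ∨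
      LeastPos r (PresentedGroup.of (rels := kleinRels) false)⁻¹ := by
  refine ⟨?_, fun r hr => ?_⟩
  · rw [setOf_isRightOrder_eq_range, Set.ncard_range_of_injective coneOrder_cone_injective]
    simp [Nat.card_eq_fintype_card, Fintype.card_units_int]
  · obtain ⟨ε, δ, rfl⟩ := exists_eq_coneOrder_cone hr
    rcases Int.units_eq_one_or ε with rfl | rfl
    · exact .inl (by simpa using leastPos_coneOrder_cone 1 δ : LeastPos _ a)
    · exact .inr (by simpa using leastPos_coneOrder_cone (-1) δ : LeastPos _ a⁻¹)
end
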